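/- Let y be a string of length n > 2 over an alphabet Σ. Then the number of distinct pairs (EndPos_y(x), b) over all x ∈ Substr(y) and b ∈ Σ such that x·b ∈ Substr(y) is at most 3n − 4. (Equivalently, the DAWG of y has at most 3n − 4 edges.) -/

import Mathlib

/-!
Fix a representative word in every `EndPos`-class; an edge `(E, b)` is then an extension
`w ++ [b]` of the representative `w` of `E`. The extensions `x ++ [b]` of all substrings are
exactly the nonempty substrings, so beyond one extension per extendable substring there are
`#nonextendable - 1` of them. As the class `{n}` of `y` has no edge, there are at most
`(#classes - 1) + (#nonextendable - 1)` edges. A nonextendable substring is a suffix with class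
`{n}`, and the classes containing `n` are those of suffixes, so these classes and the
nonextendable substrings together number at most `n + 2`. The classes avoiding `n` form a
laminar family of nonempty subsets of `{1, …, n - 1}`, hence number at most `2n - 4`, unless
`{1, …, n - 1}` is itself a class; then `y = bⁿ⁻¹c`, and they are the `n - 1` sets
`EndPos (bᵏ)`.
-/

open List

/-- 1-indexed beginning positions of occurrences of `x` in `y`:
`BegPos y x = { i | 1 ≤ i ≤ |y| - |x| + 1, y[i..i+|x|-1] = x }`. -/
def BegPos {α : Type*} (y x : List α) : Set ℕ :=
  {i | 1 ≤ i ∧ i ≤ y.length - x.length + 1 ∧ x <+: y.drop (i - 1)}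

/-- 1-indexed ending positions of occurrences of `x` in `y`:
`EndPos y x = { i | |x| ≤ i ≤ |y|, y[i-|x|+1..i] = x }`. -/
def EndPos {α : Type*} (y x : List α) : Set ℕ :=
  {i | x.length ≤ i ∧ i ≤ y.length ∧ x <:+ y.take i}

/-- `IsLrepOf y w x` means `w = Lrep_y(x)`: `w` is left-equivalent to `x` in `y`
(`BegPos y w = BegPos y x`) and is the longest such string. -/
def IsLrepOf {α : Type*} (y w x : List α) : Prop :=
  BegPos y w = BegPos y x ∧ ∀ v : List α, BegPos y v = BegPos y x → v.length ≤ w.length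

/-- `IsRrepOf y w x` means `w = Rrep_y(x)`: `w` is right-equivalent to `x` in `y`
(`EndPos y w = EndPos y x`) and is the longest such string. -/
def IsRrepOf {α : Type*} (y w x : List α) : Prop :=
  EndPos y w = EndPos y x ∧ ∀ v : List α, EndPos y v = EndPos y x → v.length ≤ w.length

/-- `x` is a minimal absent word of `y`: `x` is not a substring of `y` and
every proper substring of `x` is a substring of `y`. -/
def IsMAW {α : Type*} (y x : List α) : Prop :=
  ¬ x <:+: y ∧ ∀ w : List α, w <:+: x → w ≠ x → w <:+: y

def IsLaminar {β : Type*} (F : Set (Set β)) : Prop :=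
  ∀ A ∈ F, ∀ B ∈ F, A ⊆ B ∨ B ⊆ A ∨ Disjoint A B

namespace IsLaminar

variable {β : Type*} {F G : Set (Set β)}

theorem mono (hF : IsLaminar F) (hGF : G ⊆ F) : IsLaminar G :=
  fun A hA B hB => hF A (hGF hA) B (hGF hB)

theorem ncard_add_two_le {U : Set β} (hF : IsLaminar F) (hU : U.Finite) (hUne : U.Nonempty)
    (hFU : ∀ A ∈ F, A.Nonempty ∧ A ⊆ U) (hUF : U ∉ F) : F.ncard + 2 ≤ 2 * U.ncard := by
  induction hn : U.ncard using Nat.strong_induction_on generalizing U F with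
  | _ n ih =>
  subst hn
  have ih' : ∀ V : Set β, V.ncard < U.ncard → V.Finite → V.Nonempty → ∀ G : Set (Set β),
      IsLaminar G → (∀ A ∈ G, A.Nonempty ∧ A ⊆ V) → G.ncard + 1 ≤ 2 * V.ncard := by
    intro V hVU hV hVne G hG hGV
    have := ih _ hVU (F := G \ {V}) (hG.mono Set.sdiff_subset) hV hVne
      (fun A hA => hGV A hA.1) (fun h => h.2 rfl) rfl
    have := Set.ncard_le_ncard_sdiff_add_ncard G {V}
    simp only [Set.ncard_singleton] at this
    omega
  have hFfin : F.Finite := hU.finite_subsets.subset fun A hA => (hFU A hA).2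
  rcases F.eq_empty_or_nonempty with rfl | hFne
  · rw [Set.ncard_empty]
    have := (Set.ncard_pos hU).2 hUne
    omega
  obtain ⟨E, hEF, hEmax⟩ := hFfin.exists_maximal hFne
  have hEU : E ⊂ U := (hFU E hEF).2.ssubset_of_ne fun h => hUF (h ▸ hEF)
  have hF_split : F ⊆ {A ∈ F | A ⊆ E} ∪ {A ∈ F | A ⊆ U \ E} := by
    intro A hA
    rcases hF A hA E hEF with hAE | hEA | hdisj
    · exact Or.inl ⟨hA, hAE⟩
    · exact Or.inl ⟨hA, hEmax hA hEA⟩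
    · exact Or.inr ⟨hA, Set.subset_sdiff.2 ⟨(hFU A hA).2, hdisj⟩⟩
  have hEpos := (Set.ncard_pos (hU.subset hEU.le)).2 (hFU E hEF).1
  have hU_split := Set.ncard_sdiff_add_ncard_of_subset hEU.le hU
  have hinside := ih' E (Set.ncard_lt_ncard hEU hU) (hU.subset hEU.le) (hFU E hEF).1
    _ (hF.mono (Set.sep_subset F _)) fun A hA => ⟨(hFU A hA.1).1, hA.2⟩
  have houtside := ih' (U \ E) (by omega) hU.sdiff (Set.nonempty_of_ssubset hEU)
    _ (hF.mono (Set.sep_subset F _)) fun A hA => ⟨(hFU A hA.1).1, hA.2⟩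
  have hcard := (Set.ncard_le_ncard hF_split (hFfin.subset (by simp))).trans
    (Set.ncard_union_le _ _)
  omega

end IsLaminar

theorem Set.ncard_inter_preimage_fst_add_ncard_image_fst_le {A B : Type*} {Q : Set (A × B)}
    (hQ : Q.Finite) (R : Set A) :
    (Q ∩ Prod.fst ⁻¹' R).ncard + (Prod.fst '' Q).ncard
      ≤ Q.ncard + (Prod.fst '' Q ∩ R).ncard := by
  have hcover : Prod.fst '' Q ⊆ (Prod.fst '' Q ∩ R) ∪ Prod.fst '' (Q \ Prod.fst ⁻¹' R) := by
    rintro _ ⟨p, hp, rfl⟩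
    by_cases hpR : p.1 ∈ R
    · exact Or.inl ⟨⟨p, hp, rfl⟩, hpR⟩
    · exact Or.inr ⟨p, ⟨hp, hpR⟩, rfl⟩
  have h₁ := (Set.ncard_le_ncard hcover ((hQ.image _).inter_of_left _ |>.union
    ((hQ.sdiff).image _))).trans (Set.ncard_union_le _ _)
  have h₂ := Set.ncard_image_le (f := Prod.fst) hQ.sdiff (s := Q \ Prod.fst ⁻¹' R)
  have h₃ := Set.ncard_inter_add_ncard_sdiff_eq_ncard Q (Prod.fst ⁻¹' R) hQ
  omega

namespace List

variable {α : Type*}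

theorem append_singleton_suffix_append_singleton_iff {l₁ l₂ : List α} {a b : α} :
    l₁ ++ [a] <:+ l₂ ++ [b] ↔ l₁ <:+ l₂ ∧ a = b := by
  rw [← reverse_prefix]
  simp [cons_prefix_cons, reverse_prefix, and_comm]

theorem finite_setOf_infix (y : List α) : {x | x <:+: y}.Finite := by
  classical
  exact y.sublists.toFinset.finite_toSet.subset fun x hx => by simpa using hx.sublist

theorem ncard_setOf_suffix_le (y : List α) : {s | s <:+ y}.ncard ≤ y.length + 1 := by
  classical
  have : {s | s <:+ y} = ↑y.tails.toFinset := by ext; simp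
  rw [this, Set.ncard_coe_finset, ← length_tails]
  exact toFinset_card_le _

theorem append_singleton_injective :
    Function.Injective fun p : List α × α => p.1 ++ [p.2] := by
  rintro ⟨x, a⟩ ⟨x', a'⟩ h
  obtain ⟨rfl, h⟩ := append_inj' h rfl
  simp_all

end List

section EndPos

variable {α : Type*} {y x x₁ x₂ : List α}

theorem infix_of_mem_endPos {i : ℕ} (h : i ∈ EndPos y x) : x <:+: y :=
  h.2.2.isInfix.trans (y.take_prefix i).isInfix

theorem endPos_nonempty (h : x <:+: y) : (EndPos y x).Nonempty := by
  obtain ⟨u, v, rfl⟩ := h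
  refine ⟨u.length + x.length, le_add_self, by simp only [List.length_append]; omega, ?_⟩
  rw [List.take_left' (by simp)]
  exact List.suffix_append u x

theorem suffix_of_length_mem_endPos (h : y.length ∈ EndPos y x) : x <:+ y := by
  simpa using h.2.2

theorem endPos_subset_endPos (h : x₁ <:+ x₂) : EndPos y x₂ ⊆ EndPos y x₁ :=
  fun _ ⟨h₁, h₂, h₃⟩ => ⟨h.length_le.trans h₁, h₂, h.trans h₃⟩

theorem endPos_nil : EndPos y [] = Set.Iic y.length := by
  ext; simp [EndPos]

theorem endPos_self : EndPos y y = {y.length} := by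
  ext i
  refine ⟨fun hi => le_antisymm hi.2.1 hi.1, ?_⟩
  rintro rfl
  exact ⟨le_rfl, le_rfl, by simp⟩

theorem isLaminar_range_endPos (y : List α) : IsLaminar (Set.range (EndPos y)) := by
  rintro _ ⟨x₁, rfl⟩ _ ⟨x₂, rfl⟩
  by_cases hdisj : Disjoint (EndPos y x₁) (EndPos y x₂)
  · exact Or.inr (Or.inr hdisj)
  obtain ⟨i, h₁, h₂⟩ := Set.not_disjoint_iff.1 hdisj
  rcases le_total x₁.length x₂.length with hle | hle
  · exact Or.inr <| Or.inl <| endPos_subset_endPos <|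
      List.suffix_of_suffix_length_le h₁.2.2 h₂.2.2 hle
  · exact Or.inl <| endPos_subset_endPos <| List.suffix_of_suffix_length_le h₂.2.2 h₁.2.2 hle

theorem append_singleton_infix_iff {b : α} :
    x ++ [b] <:+: y ↔ ∃ i ∈ EndPos y x, ∃ hi : i < y.length, y[i] = b := by
  constructor
  · intro h
    obtain ⟨j, hj₁, hjn, hj⟩ := endPos_nonempty h
    replace hj₁ : x.length + 1 ≤ j := by simpa using hj₁
    obtain ⟨i, rfl⟩ : ∃ i, j = i + 1 := Nat.exists_eq_add_one.2 (by omega)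
    rw [← List.take_concat_get' y i (by omega),
      List.append_singleton_suffix_append_singleton_iff] at hj
    exact ⟨i, ⟨by omega, by omega, hj.1⟩, by omega, hj.2.symm⟩
  · rintro ⟨i, ⟨hxi, -, hx⟩, hi, rfl⟩
    refine infix_of_mem_endPos (i := i + 1)
      ⟨by simp only [List.length_append, List.length_singleton]; omega, hi, ?_⟩
    rw [← List.take_concat_get' y i hi]
    exact List.append_singleton_suffix_append_singleton_iff.2 ⟨hx, rfl⟩

end EndPos

section Dawg

variable {α : Type*} (y : List α)

def dawgEdges : Set (Set ℕ × α) :=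
  {p | ∃ (x : List α) (b : α), p = (EndPos y x, b) ∧ x <:+: y ∧ (x ++ [b]) <:+: y}

def endPosClasses : Set (Set ℕ) := EndPos y '' {x | x <:+: y}

def extensionPairs : Set (List α × α) := {p | p.1 ++ [p.2] <:+: y}

def nonextendable : Set (List α) := {x | x <:+: y} \ Prod.fst '' extensionPairs y

theorem image_extensionPairs :
    (fun p : List α × α => p.1 ++ [p.2]) '' extensionPairs y = {x | x <:+: y} \ {[]} := by
  ext x
  constructor
  · rintro ⟨p, hp, rfl⟩
    exact ⟨hp, by simp⟩
  · rintro ⟨hx, hne : x ≠ []⟩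
    refine ⟨(x.dropLast, x.getLast hne), ?_, List.dropLast_append_getLast hne⟩
    simpa [extensionPairs, List.dropLast_append_getLast hne] using hx

theorem finite_extensionPairs : (extensionPairs y).Finite :=
  Set.Finite.of_finite_image
    (by rw [image_extensionPairs]; exact (List.finite_setOf_infix y).sdiff)
    (List.append_singleton_injective.injOn)

theorem ncard_extensionPairs_add_one :
    (extensionPairs y).ncard + 1 = {x | x <:+: y}.ncard := by
  rw [← Set.ncard_image_of_injective _ List.append_singleton_injective, image_extensionPairs,
    Set.ncard_sdiff_singleton_add_one (show [] ∈ {x | x <:+: y} from List.nil_infix)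
      (List.finite_setOf_infix y)]

variable {y}

theorem endPos_eq_singleton_of_mem_nonextendable {x : List α} (hx : x ∈ nonextendable y) :
    EndPos y x = {y.length} := by
  refine (endPos_nonempty hx.1).subset_singleton_iff.1 fun i hi => ?_
  by_contra hin
  have hlt : i < y.length := lt_of_le_of_ne hi.2.1 hin
  exact hx.2 ⟨(x, y[i]), append_singleton_infix_iff.2 ⟨i, hi, hlt, rfl⟩, rfl⟩

theorem notMem_image_fst_extensionPairs_of_endPos_eq {x : List α}
    (hx : EndPos y x = {y.length}) : x ∉ Prod.fst '' extensionPairs y := by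
  rintro ⟨⟨x, b⟩, hxb, rfl⟩
  obtain ⟨i, hi, hlt, -⟩ := append_singleton_infix_iff.1 hxb
  rw [hx] at hi
  exact hlt.ne hi

variable (y)

theorem ncard_dawgEdges_add_two_le :
    (dawgEdges y).ncard + 2 ≤ (nonextendable y).ncard + (endPosClasses y).ncard := by
  set rep := Function.invFunOn (EndPos y) {x | x <:+: y}
  have hrep : ∀ E ∈ endPosClasses y, rep E <:+: y ∧ EndPos y (rep E) = E :=
    fun _ hE => ⟨Function.invFunOn_mem hE, Function.invFunOn_eq hE⟩
  set R := rep '' endPosClasses y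
  have hCfin : (endPosClasses y).Finite := (List.finite_setOf_infix y).image _
  have hedges : (dawgEdges y).ncard ≤ (extensionPairs y ∩ Prod.fst ⁻¹' R).ncard := by
    refine Set.ncard_le_ncard_of_injOn (fun p => (rep p.1, p.2)) ?_ ?_
      ((finite_extensionPairs y).inter_of_left _)
    · rintro _ ⟨x, b, rfl, hx, hxb⟩
      obtain ⟨-, hE⟩ := hrep _ ⟨x, hx, rfl⟩
      refine ⟨?_, EndPos y x, ⟨x, hx, rfl⟩, rfl⟩
      obtain ⟨i, hi, hlt, hb⟩ := append_singleton_infix_iff.1 hxb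
      exact append_singleton_infix_iff.2 ⟨i, by rwa [hE], hlt, hb⟩
    · rintro _ ⟨x, b, rfl, hx, -⟩ _ ⟨x', b', rfl, hx', -⟩ h
      simp only [Prod.mk.injEq] at h ⊢
      rw [← (hrep _ ⟨x, hx, rfl⟩).2, h.1, (hrep _ ⟨x', hx', rfl⟩).2]
      exact ⟨rfl, h.2⟩
  have hpairs := Set.ncard_inter_preimage_fst_add_ncard_image_fst_le (finite_extensionPairs y) R
  have hQ := ncard_extensionPairs_add_one y
  have hT : (nonextendable y).ncard + (Prod.fst '' extensionPairs y).ncard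
      = {x | x <:+: y}.ncard :=
    Set.ncard_sdiff_add_ncard_of_subset
      (by rintro _ ⟨p, hp, rfl⟩; exact (List.prefix_append _ _).isInfix.trans hp)
      (List.finite_setOf_infix y)
  have hR : (Prod.fst '' extensionPairs y ∩ R).ncard + 1 ≤ R.ncard := by
    have hyR : rep (EndPos y y) ∈ R := ⟨_, ⟨y, List.infix_refl y, rfl⟩, rfl⟩
    have hyE : EndPos y (rep (EndPos y y)) = {y.length} := by
      rw [(hrep _ ⟨y, List.infix_refl y, rfl⟩).2, endPos_self]
    have hsub : Prod.fst '' extensionPairs y ∩ R ⊆ R \ {rep (EndPos y y)} :=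
      fun w hw => ⟨hw.2, fun h => notMem_image_fst_extensionPairs_of_endPos_eq (h ▸ hyE) hw.1⟩
    rw [← Set.ncard_sdiff_singleton_add_one hyR (hCfin.image _)]
    exact Nat.add_le_add_right (Set.ncard_le_ncard hsub ((hCfin.image _).sdiff)) 1
  have hRC : R.ncard ≤ (endPosClasses y).ncard := Set.ncard_image_le hCfin
  omega

theorem ncard_endPosClasses_add_ncard_nonextendable_le :
    (endPosClasses y).ncard + (nonextendable y).ncard
      ≤ y.length + 2 + {E ∈ endPosClasses y | y.length ∉ E}.ncard := by
  have hSuf : {s | s <:+ y}.Finite := (List.finite_setOf_infix y).subset fun _ hs => hs.isInfix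
  have hZSuf : nonextendable y ⊆ {s | s <:+ y} := fun x hx =>
    suffix_of_length_mem_endPos ((endPos_eq_singleton_of_mem_nonextendable hx).symm ▸ rfl)
  have hcover : {E ∈ endPosClasses y | y.length ∈ E}
      ⊆ EndPos y '' ({s | s <:+ y} \ nonextendable y) ∪ {{y.length}} := by
    rintro _ ⟨⟨x, -, rfl⟩, hn⟩
    by_cases hxZ : x ∈ nonextendable y
    · exact Or.inr (endPos_eq_singleton_of_mem_nonextendable hxZ)
    · exact Or.inl ⟨x, ⟨suffix_of_length_mem_endPos hn, hxZ⟩, rfl⟩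
  have hsplit : {E ∈ endPosClasses y | y.length ∈ E}.ncard
      + {E ∈ endPosClasses y | y.length ∉ E}.ncard = (endPosClasses y).ncard :=
    Set.ncard_inter_add_ncard_sdiff_eq_ncard _ _ ((List.finite_setOf_infix y).image _)
  have hC₁ := (Set.ncard_le_ncard hcover
    ((hSuf.sdiff.image _).union (Set.finite_singleton _))).trans
    ((Set.ncard_union_le _ _).trans
      (Nat.add_le_add (Set.ncard_image_le hSuf.sdiff) (Set.ncard_singleton _).le))
  have hZ := Set.ncard_sdiff_add_ncard_of_subset hZSuf hSuf
  have := List.ncard_setOf_suffix_le y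
  omega

variable {y}

theorem take_eq_replicate_of_Icc_subset_endPos {b : α} {m : ℕ}
    (h : Set.Icc 1 m ⊆ EndPos y [b]) : y.take m = List.replicate m b := by
  induction m with
  | zero => simp
  | succ m ih =>
    have hm : m + 1 ∈ EndPos y [b] := h ⟨by omega, le_rfl⟩
    have hlt : m < y.length := hm.2.1
    have hb := hm.2.2
    rw [← List.take_concat_get' y m hlt, ← List.nil_append [b],
      List.append_singleton_suffix_append_singleton_iff] at hb
    rw [← List.take_concat_get' y m hlt, ih fun i hi => h ⟨hi.1, hi.2.trans m.le_succ⟩, hb.2,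
      List.replicate_succ']

theorem ncard_endPosClasses_notMem_length_le_of_Icc_mem (hy : 2 ≤ y.length)
    (hU : Set.Icc 1 (y.length - 1) ∈ endPosClasses y) :
    {E ∈ endPosClasses y | y.length ∉ E}.ncard ≤ y.length - 1 := by
  obtain ⟨x₀, -, hx₀⟩ := hU
  have h1 : 1 ∈ EndPos y x₀ := hx₀ ▸ ⟨le_rfl, by omega⟩
  have hx₀len : x₀.length = 1 := by
    refine le_antisymm h1.1 (List.length_pos_iff.2 ?_)
    rintro rfl
    have : 0 ∈ EndPos y [] := by simp [endPos_nil]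
    rw [hx₀] at this
    exact absurd this.1 (by omega)
  obtain ⟨b, rfl⟩ := List.length_eq_one_iff.1 hx₀len
  have htake : ∀ i ≤ y.length - 1, y.take i = List.replicate i b := fun i hi =>
    take_eq_replicate_of_Icc_subset_endPos (hx₀ ▸ Set.Icc_subset_Icc_right hi)
  have hsub : {E ∈ endPosClasses y | y.length ∉ E}
      ⊆ (fun k => EndPos y (List.replicate k b)) '' Set.Icc 1 (y.length - 1) := by
    rintro _ ⟨⟨x, hx, rfl⟩, hnx⟩
    have hxne : x ≠ [] := by rintro rfl; simp [endPos_nil] at hnx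
    obtain ⟨i, hi⟩ := endPos_nonempty hx
    have hin : i ≤ y.length - 1 := by
      have : i ≠ y.length := fun h => hnx (h ▸ hi)
      have := hi.2.1
      omega
    have hx_rep : x = List.replicate x.length b :=
      List.eq_replicate_iff.2 ⟨rfl, fun c hc =>
        List.eq_of_mem_replicate ((htake i hin ▸ hi.2.2).subset hc)⟩
    exact ⟨x.length, ⟨List.length_pos_iff.2 hxne, hi.1.trans hin⟩,
      congrArg (EndPos y) hx_rep.symm⟩
  calc _ ≤ _ := Set.ncard_le_ncard hsub ((Set.finite_Icc _ _).image _)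
    _ ≤ (Set.Icc 1 (y.length - 1)).ncard := Set.ncard_image_le (Set.finite_Icc _ _)
    _ = y.length - 1 := by simp

theorem ncard_endPosClasses_notMem_length_le (hy : 2 < y.length) :
    {E ∈ endPosClasses y | y.length ∉ E}.ncard ≤ 2 * y.length - 4 := by
  by_cases hU : Set.Icc 1 (y.length - 1) ∈ endPosClasses y
  · have := ncard_endPosClasses_notMem_length_le_of_Icc_mem hy.le hU
    omega
  have hlam : IsLaminar {E ∈ endPosClasses y | y.length ∉ E} :=
    (isLaminar_range_endPos y).mono fun _ ⟨⟨x, _, hx⟩, _⟩ => ⟨x, hx⟩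
  have hsub : ∀ E ∈ {E ∈ endPosClasses y | y.length ∉ E},
      E.Nonempty ∧ E ⊆ Set.Icc 1 (y.length - 1) := by
    rintro _ ⟨⟨x, hx, rfl⟩, hnx⟩
    have hxne : x ≠ [] := by rintro rfl; simp [endPos_nil] at hnx
    refine ⟨endPos_nonempty hx, fun i hi => ⟨?_, ?_⟩⟩
    · exact (List.length_pos_iff.2 hxne).trans_le hi.1
    · have : i ≠ y.length := fun h => hnx (h ▸ hi)
      have := hi.2.1
      omega
  have := hlam.ncard_add_two_le (Set.finite_Icc _ _) ⟨1, le_rfl, by omega⟩ hsub fun h => hU h.1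
  rw [Set.ncard_Icc_nat] at this
  omega

end Dawg

theorem dawg_edge_bound {α : Type*} (y : List α) (h : 2 < y.length) :
    {p : Set ℕ × α | ∃ (x : List α) (b : α),
        p = (EndPos y x, b) ∧ x <:+: y ∧ (x ++ [b]) <:+: y}.ncard
      ≤ 3 * y.length - 4 := by
  change (dawgEdges y).ncard ≤ _
  have h₁ := ncard_dawgEdges_add_two_le y
  have h₂ := ncard_endPosClasses_add_ncard_nonextendable_le y
  have h₃ := ncard_endPosClasses_notMem_length_le h
  omega
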